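/- arXiv:math/0205315 — 2 statements merged into one kernel-verified Lean document; each statement's English description precedes it below -/
import Mathlib

section
/- Let (S(t)) be a C₀-semigroup on H and let Q be a bounded self-adjoint nonnegative operator satisfying Hypothesis H, and let R be the unique bounded self-adjoint nonnegative operator with R² = Q∞. Then: (a) if x ∈ H satisfies S(t)Rx = Rx for all t ≥ 0, then x = 0; (b) if x ∈ H satisfies S(t)*x = x for all t ≥ 0, then x = 0 (in particular the kernel of A* is trivial, where A is the generator of (S(t))). -/
/-!
Put `g(s) = ∑ᵢ ‖Q^{1/2} S(s)* eᵢ‖²`. The Hilbert–Schmidt bound `‖Q^{1/2} S(s)* z‖² ≤ ‖z‖² g(s)`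
and `∫₀^∞ g < ∞` make `s ↦ ‖Q^{1/2} S(s)* z‖²` integrable on `(0, ∞)` for every `z`.

(b) If `S(t)* x = x` for all `t`, this function is the constant `‖Q^{1/2} x‖²`, so `Q x = 0` and
hence `Q∞ x = 0`.

(a) If `z = R x` is fixed by the semigroup, then `‖z‖² = ⟪x, R S(t)* z⟫`, while
`‖R S(t)* z‖² = ⟪Q∞ S(t)* z, S(t)* z⟫ = ∫ₜ^∞ ‖Q^{1/2} S(u)* z‖² du` is the tail of a convergent
integral. Letting `t → ∞` gives `z = 0`, hence `Q∞ x = R z = 0`.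

In both cases `x = 0` by injectivity of `Q∞`.
-/

open MeasureTheory Filter Set ContinuousLinearMap
open scoped RealInnerProductSpace ENNReal Topology

variable {H : Type*} [NormedAddCommGroup H] [InnerProductSpace ℝ H] [CompleteSpace H]

section HilbertSchmidt

variable {E F : Type*} [NormedAddCommGroup E] [InnerProductSpace ℝ E]
  [NormedAddCommGroup F] [InnerProductSpace ℝ F]

lemma HilbertBasis.enorm_sq_eq_tsum {ι : Type*} (b : HilbertBasis ι ℝ E) (v : E) :
    ‖v‖ₑ ^ 2 = ∑' i, ‖⟪b i, v⟫‖ₑ ^ 2 := by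
  have hsum : HasSum (fun i => ⟪b i, v⟫ ^ 2) (‖v‖ ^ 2) := by
    simpa only [real_inner_comm v, ← sq, real_inner_self_eq_norm_sq] using
      b.hasSum_inner_mul_inner v v
  rw [← ofReal_norm, ← ENNReal.ofReal_pow (norm_nonneg _), ← hsum.tsum_eq,
    ENNReal.ofReal_tsum_of_nonneg (fun i => sq_nonneg _) hsum.summable]
  congr 1 with i
  rw [← ofReal_norm, ← ENNReal.ofReal_pow (norm_nonneg _), Real.norm_eq_abs, sq_abs]

variable [CompleteSpace E] [CompleteSpace F]

lemma HilbertBasis.enorm_adjoint_apply_sq_le {ι : Type*} (b : HilbertBasis ι ℝ E) (T : E →L[ℝ] F)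
    (u : F) : ‖adjoint T u‖ₑ ^ 2 ≤ ‖u‖ₑ ^ 2 * ∑' i, ‖T (b i)‖ₑ ^ 2 := by
  rw [b.enorm_sq_eq_tsum, ← ENNReal.tsum_mul_left]
  refine ENNReal.tsum_le_tsum fun i => ?_
  rw [adjoint_inner_right, ← mul_pow, mul_comm]
  gcongr
  simpa only [enorm_eq_nnnorm, ← ENNReal.coe_mul, ENNReal.coe_le_coe] using
    nnnorm_inner_le_nnnorm (𝕜 := ℝ) (T (b i)) u

lemma HilbertBasis.enorm_apply_sq_le {ι : Type*} (b : HilbertBasis ι ℝ E) (T : E →L[ℝ] F)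
    (z : E) : ‖T z‖ₑ ^ 2 ≤ ‖z‖ₑ ^ 2 * ∑' i, ‖T (b i)‖ₑ ^ 2 := by
  rcases eq_or_ne (T z) 0 with hTz | hTz
  · simp [hTz]
  have hsq : ‖T z‖ₑ ^ 2 ≤ ‖adjoint T (T z)‖ₑ * ‖z‖ₑ := by
    have h : ‖T z‖₊ ^ 2 ≤ ‖adjoint T (T z)‖₊ * ‖z‖₊ := by
      rw [← NNReal.coe_le_coe]
      push_cast
      rw [← real_inner_self_eq_norm_sq, ← adjoint_inner_left]
      exact real_inner_le_norm _ _
    simpa only [enorm_eq_nnnorm, ← ENNReal.coe_pow, ← ENNReal.coe_mul, ENNReal.coe_le_coe] using h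
  have hne : ‖T z‖ₑ ^ 2 ≠ 0 := by simpa using hTz
  refine (ENNReal.mul_le_mul_iff_right hne (by simp)).mp ?_
  calc ‖T z‖ₑ ^ 2 * ‖T z‖ₑ ^ 2 = (‖T z‖ₑ ^ 2) ^ 2 := by ring
    _ ≤ (‖adjoint T (T z)‖ₑ * ‖z‖ₑ) ^ 2 := by gcongr
    _ = ‖adjoint T (T z)‖ₑ ^ 2 * ‖z‖ₑ ^ 2 := mul_pow _ _ _
    _ ≤ (‖T z‖ₑ ^ 2 * ∑' i, ‖T (b i)‖ₑ ^ 2) * ‖z‖ₑ ^ 2 := by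
        gcongr; exact b.enorm_adjoint_apply_sq_le T _
    _ = ‖T z‖ₑ ^ 2 * (‖z‖ₑ ^ 2 * ∑' i, ‖T (b i)‖ₑ ^ 2) := by ring

lemma HilbertBasis.lintegral_enorm_apply_sq_lt_top {ι α : Type*} [MeasurableSpace α]
    {μ : Measure α} (b : HilbertBasis ι ℝ E) (T : α → E →L[ℝ] F)
    (hT : ∫⁻ s, ∑' i, ‖T s (b i)‖ₑ ^ 2 ∂μ < ∞) (z : E) : ∫⁻ s, ‖T s z‖ₑ ^ 2 ∂μ < ∞ :=
  calc ∫⁻ s, ‖T s z‖ₑ ^ 2 ∂μ ≤ ∫⁻ s, ‖z‖ₑ ^ 2 * ∑' i, ‖T s (b i)‖ₑ ^ 2 ∂μ :=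
        lintegral_mono fun s => b.enorm_apply_sq_le (T s) z
    _ = ‖z‖ₑ ^ 2 * ∫⁻ s, ∑' i, ‖T s (b i)‖ₑ ^ 2 ∂μ := lintegral_const_mul' _ _ (by simp)
    _ < ∞ := ENNReal.mul_lt_top (by simp) hT

end HilbertSchmidt

lemma setLIntegral_Ioi_comp_const_add (g : ℝ → ℝ≥0∞) (t : ℝ) :
    ∫⁻ s in Ioi 0, g (t + s) = ∫⁻ u in Ioi t, g u := by
  rw [(measurePreserving_add_left volume t).setLIntegral_comp_emb (measurableEmbedding_addLeft t),
    image_const_add_Ioi, add_zero]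

lemma tendsto_setLIntegral_Ioi_atTop {g : ℝ → ℝ≥0∞} {a : ℝ} (hg : ∫⁻ s in Ioi a, g s ≠ ∞) :
    Tendsto (fun t => ∫⁻ s in Ioi t, g s) atTop (𝓝 0) := by
  have h := tendsto_measure_iInter_atTop (μ := volume.withDensity g)
    (fun t => measurableSet_Ioi.nullMeasurableSet) (fun _ _ hst => Ioi_subset_Ioi hst)
    ⟨a, by rwa [withDensity_apply _ measurableSet_Ioi]⟩
  have hempty : ⋂ t : ℝ, Ioi t = ∅ := by
    ext x; simpa using ⟨x, le_rfl⟩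
  simpa [Function.comp_def, withDensity_apply _ measurableSet_Ioi, hempty] using h

-- Only an inequality, so that it also covers non-integrable `f`, whose Bochner integral is `0`.
lemma inner_integral_le_toReal_lintegral {E : Type*} [NormedAddCommGroup E]
    [InnerProductSpace ℝ E] [CompleteSpace E] {α : Type*} [MeasurableSpace α] {μ : Measure α}
    (f : α → E) (w : E) (hf : ∀ s, 0 ≤ ⟪f s, w⟫) :
    ⟪∫ s, f s ∂μ, w⟫ ≤ (∫⁻ s, ENNReal.ofReal ⟪f s, w⟫ ∂μ).toReal := by
  by_cases hint : Integrable f μ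
  · rw [real_inner_comm, ← integral_inner hint]
    simp only [real_inner_comm _ w]
    exact (integral_eq_lintegral_of_nonneg_ae (Eventually.of_forall hf)
      (hint.aestronglyMeasurable.inner aestronglyMeasurable_const)).le
  · rw [integral_undef hint, inner_zero_left]
    exact ENNReal.toReal_nonneg

lemma IsSelfAdjoint.inner_conj_apply_eq_norm_sq {E F : Type*} [NormedAddCommGroup E]
    [InnerProductSpace ℝ E] [CompleteSpace E] [NormedAddCommGroup F]
    [InnerProductSpace ℝ F] [CompleteSpace F] {P Q : E →L[ℝ] E} (hP : IsSelfAdjoint P)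
    (hPQ : P.comp P = Q) (T : E →L[ℝ] F) (w : F) :
    ⟪T (Q (adjoint T w)), w⟫ = ‖P (adjoint T w)‖ ^ 2 := by
  rw [← adjoint_inner_right, ← hPQ, comp_apply, ← real_inner_self_eq_norm_sq]
  exact hP.isSymmetric _ _

section Semigroup

variable {S : ℝ → H →L[ℝ] H} {P Q R : H →L[ℝ] H}

lemma norm_sq_apply_adjoint_le_toReal_setLIntegral
    (hSadd : ∀ s t : ℝ, 0 ≤ s → 0 ≤ t → S (s + t) = (S s).comp (S t))
    (hP : IsSelfAdjoint P) (hPQ : P.comp P = Q) (hR : IsSelfAdjoint R)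
    (hR2 : ∀ x : H, R (R x) = ∫ s in Ioi (0:ℝ), S s (Q (adjoint (S s) x)))
    {t : ℝ} (ht : 0 ≤ t) (z : H) :
    ‖R (adjoint (S t) z)‖ ^ 2 ≤ (∫⁻ u in Ioi t, ‖P (adjoint (S u) z)‖ₑ ^ 2).toReal := by
  set w := adjoint (S t) z
  have hshift : ∀ s ∈ Ioi (0:ℝ), adjoint (S s) w = adjoint (S (t + s)) z := fun s hs => by
    rw [hSadd t s ht hs.le, adjoint_comp, comp_apply]
  calc ‖R w‖ ^ 2 = ⟪R (R w), w⟫ := by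
        rw [← real_inner_self_eq_norm_sq]; exact (hR.isSymmetric _ _).symm
    _ ≤ (∫⁻ s in Ioi (0:ℝ), ENNReal.ofReal ⟪S s (Q (adjoint (S s) w)), w⟫).toReal := by
        rw [hR2]
        refine inner_integral_le_toReal_lintegral _ w fun s => ?_
        rw [hP.inner_conj_apply_eq_norm_sq hPQ]
        positivity
    _ = (∫⁻ s in Ioi (0:ℝ), ‖P (adjoint (S (t + s)) z)‖ₑ ^ 2).toReal := by
        congr 1
        refine setLIntegral_congr_fun measurableSet_Ioi fun s hs => ?_
        rw [hP.inner_conj_apply_eq_norm_sq hPQ, hshift s hs, ← ofReal_norm,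
          ENNReal.ofReal_pow (norm_nonneg _)]
    _ = (∫⁻ u in Ioi t, ‖P (adjoint (S u) z)‖ₑ ^ 2).toReal := by
        rw [setLIntegral_Ioi_comp_const_add (fun u => ‖P (adjoint (S u) z)‖ₑ ^ 2)]

lemma tendsto_norm_sq_apply_adjoint_atTop
    (hSadd : ∀ s t : ℝ, 0 ≤ s → 0 ≤ t → S (s + t) = (S s).comp (S t))
    (hP : IsSelfAdjoint P) (hPQ : P.comp P = Q) (hR : IsSelfAdjoint R)
    (hR2 : ∀ x : H, R (R x) = ∫ s in Ioi (0:ℝ), S s (Q (adjoint (S s) x)))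
    {z : H} (hz : ∫⁻ s in Ioi (0:ℝ), ‖P (adjoint (S s) z)‖ₑ ^ 2 < ∞) :
    Tendsto (fun t => ‖R (adjoint (S t) z)‖ ^ 2) atTop (𝓝 0) := by
  have htail := (ENNReal.tendsto_toReal ENNReal.zero_ne_top).comp
    (tendsto_setLIntegral_Ioi_atTop hz.ne)
  refine squeeze_zero' (Eventually.of_forall fun t => by positivity) ?_ htail
  filter_upwards [eventually_ge_atTop 0] with t ht
  exact norm_sq_apply_adjoint_le_toReal_setLIntegral hSadd hP hPQ hR hR2 ht z

lemma IsSelfAdjoint.apply_eq_zero_of_forall_apply_eq_self (hR : IsSelfAdjoint R) {x : H}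
    (hfix : ∀ t : ℝ, 0 ≤ t → S t (R x) = R x)
    (htail : Tendsto (fun t => ‖R (adjoint (S t) (R x))‖ ^ 2) atTop (𝓝 0)) : R x = 0 := by
  have hbound : ∀ t : ℝ, 0 ≤ t → (‖R x‖ ^ 2) ^ 2 ≤ ‖x‖ ^ 2 * ‖R (adjoint (S t) (R x))‖ ^ 2 := by
    intro t ht
    have h : ‖R x‖ ^ 2 ≤ ‖x‖ * ‖R (adjoint (S t) (R x))‖ := by
      calc ‖R x‖ ^ 2 = ⟪S t (R x), R x⟫ := by rw [hfix t ht, real_inner_self_eq_norm_sq]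
        _ = ⟪R x, adjoint (S t) (R x)⟫ := (adjoint_inner_right _ _ _).symm
        _ = ⟪x, R (adjoint (S t) (R x))⟫ := hR.isSymmetric _ _
        _ ≤ ‖x‖ * ‖R (adjoint (S t) (R x))‖ := real_inner_le_norm _ _
    calc (‖R x‖ ^ 2) ^ 2 ≤ (‖x‖ * ‖R (adjoint (S t) (R x))‖) ^ 2 := by gcongr
      _ = _ := mul_pow _ _ _
  have hle : (‖R x‖ ^ 2) ^ 2 ≤ 0 := by
    simpa using ge_of_tendsto (htail.const_mul (‖x‖ ^ 2))
      ((eventually_ge_atTop 0).mono hbound)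
  simpa using hle

lemma setIntegral_conj_eq_zero_of_forall_adjoint_apply_eq_self {x : H}
    (hPQ : P.comp P = Q) (hfix : ∀ t : ℝ, 0 ≤ t → adjoint (S t) x = x)
    (hx : ∫⁻ s in Ioi (0:ℝ), ‖P (adjoint (S s) x)‖ₑ ^ 2 < ∞) :
    ∫ s in Ioi (0:ℝ), S s (Q (adjoint (S s) x)) = 0 := by
  have hconst : ∀ s ∈ Ioi (0:ℝ), ‖P (adjoint (S s) x)‖ₑ ^ 2 = ‖P x‖ₑ ^ 2 := fun s hs => by
    rw [hfix s hs.le]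
  rw [setLIntegral_congr_fun measurableSet_Ioi hconst, setLIntegral_const, Real.volume_Ioi] at hx
  have hPx : P x = 0 := by
    by_contra hne
    rw [ENNReal.mul_top (by simpa using hne)] at hx
    exact lt_irrefl _ hx
  have hQx : Q x = 0 := by rw [← hPQ, comp_apply, hPx, map_zero]
  rw [setIntegral_congr_fun measurableSet_Ioi fun s hs => by
    rw [hfix s hs.le, hQx, map_zero], integral_zero]

end Semigroup

theorem statement4_general {ι : Type*}
    (S : ℝ → H →L[ℝ] H)
    (hSadd : ∀ s t : ℝ, 0 ≤ s → 0 ≤ t → S (s + t) = (S s).comp (S t))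
    (Q sqrtQ : H →L[ℝ] H)
    (hsqrt_sa : IsSelfAdjoint sqrtQ)
    (hsqrt_sq : sqrtQ.comp sqrtQ = Q)
    -- (e_i) is an orthonormal basis of H
    (e : ι → H) (he : Orthonormal ℝ e)
    (he_tot : Dense ((Submodule.span ℝ (Set.range e) : Submodule ℝ H) : Set H))
    -- Hypothesis H, part 1: ∫₀^∞ Σ_i |Q^{1/2}S(s)*e_i|² ds < ∞
    (hint : (∫⁻ s in Set.Ioi (0:ℝ),
        ∑' i : ι, (‖sqrtQ (ContinuousLinearMap.adjoint (S s) (e i))‖₊ : ℝ≥0∞) ^ 2) < ⊤)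
    -- Hypothesis H, part 2: Q∞ is injective
    (hQinf_inj : Function.Injective (fun x : H =>
      ∫ s in Set.Ioi (0:ℝ), S s (Q (ContinuousLinearMap.adjoint (S s) x))))
    -- R is the (unique) bounded self-adjoint nonnegative operator with R² = Q∞
    (R : H →L[ℝ] H) (hRsa : IsSelfAdjoint R)
    (hR2 : ∀ x : H,
      R (R x) = ∫ s in Set.Ioi (0:ℝ), S s (Q (ContinuousLinearMap.adjoint (S s) x))) :
    (∀ x : H, (∀ t : ℝ, 0 ≤ t → S t (R x) = R x) → x = 0) ∧
      (∀ x : H, (∀ t : ℝ, 0 ≤ t → ContinuousLinearMap.adjoint (S t) x = x) → x = 0) := by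
  let b : HilbertBasis ι ℝ H :=
    HilbertBasis.mk he (Submodule.dense_iff_topologicalClosure_eq_top.mp he_tot).ge
  have hfin : ∀ z : H, ∫⁻ s in Ioi (0:ℝ), ‖sqrtQ (adjoint (S s) z)‖ₑ ^ 2 < ∞ :=
    b.lintegral_enorm_apply_sq_lt_top (fun s => sqrtQ.comp (adjoint (S s)))
      (by simpa [b, enorm_eq_nnnorm] using hint)
  have hker : ∀ y : H, ∫ s in Ioi (0:ℝ), S s (Q (adjoint (S s) y)) = 0 → y = 0 :=
    fun y hy => hQinf_inj (hy.trans (by simp))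
  refine ⟨fun x hx => hker x ?_, fun x hx => hker x ?_⟩
  · rw [← hR2, hRsa.apply_eq_zero_of_forall_apply_eq_self hx
      (tendsto_norm_sq_apply_adjoint_atTop hSadd hsqrt_sa hsqrt_sq hRsa hR2 (hfin _)), map_zero]
  · exact setIntegral_conj_eq_zero_of_forall_adjoint_apply_eq_self hsqrt_sq hx (hfin x)

theorem statement4 {ι : Type*}
    (S : ℝ → H →L[ℝ] H)
    (hS0 : S 0 = 1)
    (hSadd : ∀ s t : ℝ, 0 ≤ s → 0 ≤ t → S (s + t) = (S s).comp (S t))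
    (hScont : ∀ x : H, ContinuousOn (fun t => S t x) (Set.Ici 0))
    (Q sqrtQ : H →L[ℝ] H) (hQsa : IsSelfAdjoint Q) (hQnn : ∀ x : H, 0 ≤ ⟪Q x, x⟫)
    (hsqrt_sa : IsSelfAdjoint sqrtQ) (hsqrt_nn : ∀ x : H, 0 ≤ ⟪sqrtQ x, x⟫)
    (hsqrt_sq : sqrtQ.comp sqrtQ = Q)
    -- (e_i) is an orthonormal basis of H
    (e : ι → H) (he : Orthonormal ℝ e)
    (he_tot : Dense ((Submodule.span ℝ (Set.range e) : Submodule ℝ H) : Set H))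
    -- Hypothesis H, part 1: ∫₀^∞ Σ_i |Q^{1/2}S(s)*e_i|² ds < ∞
    (hint : (∫⁻ s in Set.Ioi (0:ℝ),
        ∑' i : ι, (‖sqrtQ (ContinuousLinearMap.adjoint (S s) (e i))‖₊ : ℝ≥0∞) ^ 2) < ⊤)
    -- Hypothesis H, part 2: Q∞ is injective
    (hQinf_inj : Function.Injective (fun x : H =>
      ∫ s in Set.Ioi (0:ℝ), S s (Q (ContinuousLinearMap.adjoint (S s) x))))
    -- R is the (unique) bounded self-adjoint nonnegative operator with R² = Q∞
    (R : H →L[ℝ] H) (hRsa : IsSelfAdjoint R) (hRnn : ∀ x : H, 0 ≤ ⟪R x, x⟫)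
    (hR2 : ∀ x : H,
      R (R x) = ∫ s in Set.Ioi (0:ℝ), S s (Q (ContinuousLinearMap.adjoint (S s) x))) :
    (∀ x : H, (∀ t : ℝ, 0 ≤ t → S t (R x) = R x) → x = 0) ∧
      (∀ x : H, (∀ t : ℝ, 0 ≤ t → ContinuousLinearMap.adjoint (S t) x = x) → x = 0) :=
  statement4_general S hSadd Q sqrtQ hsqrt_sa hsqrt_sq e he he_tot hint hQinf_inj R hRsa hR2
end

section
/- Let (S(t)) be a C₀-semigroup on H with generator A, and let Q be a bounded self-adjoint nonnegative operator satisfying Hypothesis H. Assume that for every x ∈ dom(A*) one has Qx ∈ dom(A) and AQx = QA*x. Then |Q^{1/2}S(t)*x| ≤ |Q^{1/2}x| for every t ≥ 0 and every x ∈ H. -/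
/-!
The adjoint family `S(t)*` is again a C₀-semigroup: it is locally bounded, and for `x ∈ dom(A*)`
one has `|S(t)*x - x| ≤ t M |A*x|`, so it is strongly continuous on the dense subspace `dom(A*)`,
hence everywhere. Its orbits through `dom(A*)` are differentiable with derivative `S(t)*A*x`, so for
`a, b ∈ dom(A*)` the function `σ ↦ ⟨Q S(σ)*a, S(t-σ)*b⟩` has derivative
`⟨Q A* S(σ)*a, S(t-σ)*b⟩ - ⟨Q S(σ)*a, A* S(t-σ)*b⟩ = 0`, because `A Q = Q A*`. Comparing its values
at `0` and `t` gives `Q S(t)* = S(t) Q`.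

Consequently `⟨Q^{1/2}S(α)*x, Q^{1/2}S(β)*x⟩ = ⟨x, S(α+β)Qx⟩`, and Cauchy–Schwarz makes
`f(s) = |Q^{1/2}S(s)*x|²` midpoint convex on `[0, ∞)`. Hypothesis H bounds `f(s)` by `|x|²` times
the squared Hilbert–Schmidt norm of `Q^{1/2}S(s)*`, so `f` is integrable on `(0, ∞)`. If
`f(t) > f(0)`, midpoint convexity makes the increments `f((k+1)t) - f(kt)` at least `f(t) - f(0)`,
so `f(kt) → ∞`, whereas `2t f(kt) ≤ ∫_{(k-1)t}^{(k+1)t} f` stays bounded.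
-/

open MeasureTheory Filter Set ContinuousLinearMap
open scoped RealInnerProductSpace ENNReal

noncomputable section

variable {H : Type*} [NormedAddCommGroup H] [InnerProductSpace ℝ H] [CompleteSpace H]

/-- `x ∈ dom(A)` and `Ax = y` for the generator `A` of the semigroup `S`. -/
def genTo (S : ℝ → H →L[ℝ] H) (x y : H) : Prop :=
  Filter.Tendsto (fun t : ℝ => t⁻¹ • (S t x - x)) (nhdsWithin 0 (Set.Ioi 0)) (nhds y)

/-- `x ∈ dom(A*)` and `A*x = z` for the adjoint of the generator of `S`. -/
def adjTo (S : ℝ → H →L[ℝ] H) (x z : H) : Prop :=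
  ∀ y y' : H, genTo S y y' → ⟪y', x⟫ = ⟪y, z⟫

open Topology

set_option linter.unusedSectionVars false

theorem hasDerivWithinAt_Ioi_iff_tendsto_slope_zero {E : Type*} [NormedAddCommGroup E]
    [NormedSpace ℝ E] {f : ℝ → E} {f' : E} {x : ℝ} :
    HasDerivWithinAt f f' (Ioi x) x ↔
      Tendsto (fun t => t⁻¹ • (f (x + t) - f x)) (𝓝[>] 0) (𝓝 f') := by
  rw [hasDerivWithinAt_iff_tendsto_slope' self_notMem_Ioi, ← add_zero x, ← map_add_left_nhdsGT,
    tendsto_map'_iff, add_zero]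
  simp [Function.comp_def, slope_def_module]

section IntegralFTC

variable {E : Type*} [NormedAddCommGroup E] [NormedSpace ℝ E] [CompleteSpace E] {g : ℝ → E}

theorem hasDerivWithinAt_Ioi_integral_of_continuousOn (hg : ContinuousOn g (Ici 0)) {u : ℝ}
    (hu : 0 ≤ u) : HasDerivWithinAt (fun r => ∫ w in 0..r, g w) (g u) (Ioi u) u := by
  have hIoi : Ioi u ⊆ Ici 0 := fun r hr => hu.trans (le_of_lt hr)
  refine (intervalIntegral.integral_hasDerivWithinAt_right (s := Ici u) (t := Ioi u)
    ((hg.mono ?_).intervalIntegrable)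
    ((hg.mono hIoi).stronglyMeasurableAtFilter_nhdsWithin measurableSet_Ioi u)
    ((hg u hu).mono hIoi)).mono Ioi_subset_Ici_self
  rw [uIcc_of_le hu]
  exact fun r hr => hr.1

theorem hasDerivAt_integral_of_continuousOn (hg : ContinuousOn g (Ici 0)) {u : ℝ} (hu : 0 < u) :
    HasDerivAt (fun r => ∫ w in 0..r, g w) (g u) u :=
  intervalIntegral.integral_hasDerivAt_right
    ((hg.mono fun r hr => by rw [uIcc_of_le hu.le] at hr; exact hr.1).intervalIntegrable)
    ((hg.mono Ioi_subset_Ici_self).stronglyMeasurableAtFilter isOpen_Ioi u hu)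
    (hg.continuousAt (Ici_mem_nhds hu))

end IntegralFTC

theorem tendsto_apply_of_dense {E : Type*} [NormedAddCommGroup E] [NormedSpace ℝ E] {ι : Type*}
    {l : Filter ι} {T : ι → E →L[ℝ] E} {M : ℝ} (hM : ∀ᶠ i in l, ‖T i‖ ≤ M) {D : Set E}
    (hD : Dense D) (hlim : ∀ y ∈ D, Tendsto (fun i => T i y) l (𝓝 y)) (x : E) :
    Tendsto (fun i => T i x) l (𝓝 x) := by
  rw [Metric.tendsto_nhds]
  intro η hη
  have hc : 0 < |M| + 1 := by positivity
  obtain ⟨y, hyD, hxy⟩ := hD.exists_dist_lt x (div_pos (half_pos hη) hc)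
  rw [lt_div_iff₀ hc] at hxy
  filter_upwards [hM, Metric.tendsto_nhds.1 (hlim y hyD) _ (half_pos hη)] with i hMi hyi
  have hTi : dist (T i x) (T i y) ≤ |M| * dist x y := by
    rw [dist_eq_norm, dist_eq_norm, ← map_sub]
    exact ((T i).le_opNorm _).trans (by gcongr; exact hMi.trans (le_abs_self M))
  calc dist (T i x) x ≤ dist (T i x) (T i y) + dist (T i y) y + dist y x := dist_triangle4 _ _ _ _
    _ < η := by rw [dist_comm y x]; nlinarith [dist_nonneg (x := x) (y := y)]

theorem inner_intervalIntegral_left {f : ℝ → H} {a b : ℝ} (hf : IntervalIntegrable f volume a b)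
    (v : H) : ⟪∫ r in a..b, f r, v⟫ = ∫ r in a..b, ⟪f r, v⟫ := by
  simpa only [innerSL_apply_apply, real_inner_comm v] using
    ((innerSL ℝ v).intervalIntegral_comp_comm hf).symm

structure IsC0Semigroup {E : Type*} [NormedAddCommGroup E] [NormedSpace ℝ E]
    (S : ℝ → E →L[ℝ] E) : Prop where
  map_zero : S 0 = 1
  map_add : ∀ s t : ℝ, 0 ≤ s → 0 ≤ t → S (s + t) = (S s).comp (S t)
  continuousOn : ∀ x, ContinuousOn (fun t => S t x) (Ici 0)

namespace IsC0Semigroup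

variable {E : Type*} [NormedAddCommGroup E] [NormedSpace ℝ E] {S : ℝ → E →L[ℝ] E}

theorem apply_apply (hS : IsC0Semigroup S) {s t : ℝ} (hs : 0 ≤ s) (ht : 0 ≤ t) (x : E) :
    S s (S t x) = S (s + t) x := by
  rw [hS.map_add s t hs ht, comp_apply]

theorem apply_comm (hS : IsC0Semigroup S) {s t : ℝ} (hs : 0 ≤ s) (ht : 0 ≤ t) (x : E) :
    S s (S t x) = S t (S s x) := by
  rw [hS.apply_apply hs ht, hS.apply_apply ht hs, add_comm]

theorem intervalIntegrable (hS : IsC0Semigroup S) (x : E) {a b : ℝ} (ha : 0 ≤ a) (hb : 0 ≤ b) :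
    IntervalIntegrable (fun t => S t x) volume a b :=
  ((hS.continuousOn x).mono fun _ hr => (le_min ha hb).trans hr.1).intervalIntegrable

theorem exists_norm_le [CompleteSpace E] (hS : IsC0Semigroup S) (T : ℝ) :
    ∃ M, ∀ t ∈ Icc 0 T, ‖S t‖ ≤ M := by
  have hbdd (x : E) : ∃ C, ∀ t : Icc (0 : ℝ) T, ‖S t x‖ ≤ C := by
    obtain ⟨C, hC⟩ := isCompact_Icc.exists_bound_of_continuousOn
      ((hS.continuousOn x).mono fun _ ht => ht.1)
    exact ⟨C, fun t => hC t t.2⟩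
  obtain ⟨M, hM⟩ := banach_steinhaus hbdd
  exact ⟨M, fun t ht => hM ⟨t, ht⟩⟩

theorem exists_clm_eq_integral [CompleteSpace E] (hS : IsC0Semigroup S) {δ : ℝ} (hδ : 0 ≤ δ) :
    ∃ V : E →L[ℝ] E, ∀ x, V x = ∫ r in 0..δ, S r x := by
  obtain ⟨M, hM⟩ := hS.exists_norm_le δ
  let V : E →ₗ[ℝ] E :=
    { toFun := fun x => ∫ r in 0..δ, S r x
      map_add' := fun x y => by
        simp only [_root_.map_add]
        exact intervalIntegral.integral_add (hS.intervalIntegrable x le_rfl hδ)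
          (hS.intervalIntegrable y le_rfl hδ)
      map_smul' := fun c x => by
        simp only [_root_.map_smul]
        exact intervalIntegral.integral_smul c _ }
  refine ⟨V.mkContinuous (M * δ) fun x => ?_, fun x => rfl⟩
  have hbound : ∀ r ∈ uIoc 0 δ, ‖S r x‖ ≤ M * ‖x‖ := fun r hr => by
    rw [uIoc_of_le hδ] at hr
    exact ((S r).le_opNorm x).trans (by gcongr; exact hM r ⟨hr.1.le, hr.2⟩)
  calc ‖V x‖ ≤ M * ‖x‖ * |δ - 0| := intervalIntegral.norm_integral_le_of_norm_le_const hbound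
    _ = M * δ * ‖x‖ := by rw [sub_zero, abs_of_nonneg hδ]; ring

theorem of_tendsto_nhdsGT_zero (h0 : S 0 = 1)
    (hadd : ∀ s t : ℝ, 0 ≤ s → 0 ≤ t → S (s + t) = (S s).comp (S t))
    (hbdd : ∀ T, ∃ M, ∀ t ∈ Icc 0 T, ‖S t‖ ≤ M)
    (hlim : ∀ x, Tendsto (fun t => S t x) (𝓝[>] 0) (𝓝 x)) : IsC0Semigroup S := by
  refine ⟨h0, hadd, fun x u hu => ?_⟩
  obtain ⟨M, hM⟩ := hbdd (u + 1)
  have hstep {a b : ℝ} (ha : 0 ≤ a) (hab : a ≤ b) :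
      ‖S b x - S a x‖ ≤ ‖S a‖ * ‖S (b - a) x - x‖ := by
    calc ‖S b x - S a x‖ = ‖S a (S (b - a) x - x)‖ := by
          rw [map_sub, ← comp_apply (S a), ← hadd a (b - a) ha (sub_nonneg.2 hab), add_sub_cancel]
      _ ≤ ‖S a‖ * ‖S (b - a) x - x‖ := (S a).le_opNorm _
  have hdiff {r : ℝ} (hr : r ∈ Icc 0 (u + 1)) : ‖S r x - S u x‖ ≤ M * ‖S |r - u| x - x‖ := by
    rcases le_total u r with hur | hru
    · rw [abs_of_nonneg (sub_nonneg.2 hur)]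
      exact (hstep hu hur).trans (by gcongr; exact hM u ⟨hu, by linarith⟩)
    · rw [norm_sub_rev, abs_of_nonpos (sub_nonpos.2 hru), neg_sub]
      exact (hstep hr.1 hru).trans (by gcongr; exact hM r hr)
  have hzero : ContinuousWithinAt (fun t => S t x) (Ici 0) 0 := by
    rw [← continuousWithinAt_Ioi_iff_Ici, ContinuousWithinAt, h0, one_apply_eq_self]
    exact hlim x
  have habs : Tendsto (fun r => S |r - u| x) (𝓝 u) (𝓝 x) := by
    have h := hzero.tendsto
    rw [h0, one_apply_eq_self] at h
    refine h.comp (tendsto_nhdsWithin_iff.2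
      ⟨?_, Eventually.of_forall fun r => mem_Ici.2 (abs_nonneg _)⟩)
    simpa using (continuous_sub_right u).abs.tendsto u
  rw [ContinuousWithinAt, tendsto_iff_norm_sub_tendsto_zero]
  refine squeeze_zero' (Eventually.of_forall fun _ => norm_nonneg _) ?_
    (by simpa using ((habs.sub_const x).norm.const_mul M).mono_left nhdsWithin_le_nhds)
  filter_upwards [self_mem_nhdsWithin, nhdsWithin_le_nhds (Iio_mem_nhds (lt_add_one u))]
    with r hr hru
  exact hdiff ⟨hr, hru.le⟩

end IsC0Semigroup

section Generator

variable {S : ℝ → H →L[ℝ] H} {m m' : H}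

theorem genTo.hasDerivWithinAt_Ioi (hm : genTo S m m') (hS : IsC0Semigroup S) {u : ℝ}
    (hu : 0 ≤ u) : HasDerivWithinAt (fun r => S r m) (S u m') (Ioi u) u := by
  rw [hasDerivWithinAt_Ioi_iff_tendsto_slope_zero]
  refine (((S u).continuous.tendsto m').comp hm).congr' ?_
  filter_upwards [self_mem_nhdsWithin] with ε (hε : 0 < ε)
  rw [Function.comp_apply, map_smul, map_sub, hS.apply_apply hu hε.le]

theorem genTo.sub_eq_integral (hm : genTo S m m') (hS : IsC0Semigroup S) {t : ℝ} (ht : 0 ≤ t) :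
    S t m - m = ∫ r in 0..t, S r m' := by
  rw [intervalIntegral.integral_eq_sub_of_hasDeriv_right_of_le ht
    ((hS.continuousOn m).mono Icc_subset_Ici_self)
    (fun u hu => hm.hasDerivWithinAt_Ioi hS hu.1.le) (hS.intervalIntegrable m' le_rfl ht),
    hS.map_zero, one_apply_eq_self]

theorem genTo.hasDerivAt (hm : genTo S m m') (hS : IsC0Semigroup S) {u : ℝ} (hu : 0 < u) :
    HasDerivAt (fun r => S r m) (S u m') u := by
  refine ((hasDerivAt_integral_of_continuousOn (hS.continuousOn m') hu).const_add m)
    |>.congr_of_eventuallyEq ?_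
  filter_upwards [Ioi_mem_nhds hu] with r hr
  rw [← hm.sub_eq_integral hS (le_of_lt hr), add_sub_cancel]

theorem genTo.apply (hm : genTo S m m') (hS : IsC0Semigroup S) {t : ℝ} (ht : 0 ≤ t) :
    genTo S (S t m) (S t m') := by
  refine (((S t).continuous.tendsto m').comp hm).congr' ?_
  filter_upwards [self_mem_nhdsWithin] with ε (hε : 0 < ε)
  rw [Function.comp_apply, map_smul, map_sub, hS.apply_comm ht hε.le]

theorem genTo_integral (hS : IsC0Semigroup S) (x : H) {δ : ℝ} (hδ : 0 ≤ δ) :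
    genTo S (∫ r in 0..δ, S r x) (S δ x - x) := by
  set F : ℝ → H := fun r => ∫ w in 0..r, S w x
  have hF (u : ℝ) (hu : 0 ≤ u) := hasDerivWithinAt_Ioi_iff_tendsto_slope_zero.1
    (hasDerivWithinAt_Ioi_integral_of_continuousOn (hS.continuousOn x) hu)
  have hshift {ε : ℝ} (hε : 0 ≤ ε) : S ε (F δ) - F δ = (F (δ + ε) - F δ) - (F (0 + ε) - F 0) := by
    have hcomm : S ε (F δ) = ∫ r in 0..δ, S (r + ε) x := by
      rw [← (S ε).intervalIntegral_comp_comm (hS.intervalIntegrable x le_rfl hδ)]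
      refine intervalIntegral.integral_congr fun r hr => ?_
      rw [uIcc_of_le hδ] at hr
      rw [hS.apply_apply hε hr.1, add_comm]
    rw [hcomm, intervalIntegral.integral_comp_add_right (fun r => S r x),
      ← intervalIntegral.integral_interval_sub_left (hS.intervalIntegrable x le_rfl (by linarith))
        (hS.intervalIntegrable x le_rfl (by linarith))]
    simp only [F, intervalIntegral.integral_same]
    abel
  have hlim := (hF δ hδ).sub (hF 0 le_rfl)
  rw [hS.map_zero, one_apply_eq_self] at hlim
  refine hlim.congr' ?_
  filter_upwards [self_mem_nhdsWithin] with ε (hε : 0 < ε)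
  rw [hshift hε.le]
  exact (smul_sub _ _ _).symm

end Generator

section Adjoint

variable {S : ℝ → H →L[ℝ] H} {x z : H}

theorem adjTo.adjoint_apply (hx : adjTo S x z) (hS : IsC0Semigroup S) {t : ℝ} (ht : 0 ≤ t) :
    adjTo S (adjoint (S t) x) (adjoint (S t) z) := fun y y' hy => by
  rw [adjoint_inner_right, adjoint_inner_right]
  exact hx _ _ (hy.apply hS ht)

theorem adjTo.inner_sub_eq_integral (hx : adjTo S x z) (hS : IsC0Semigroup S) (v : H) {t : ℝ}
    (ht : 0 ≤ t) : ⟪S t v - v, x⟫ = ∫ r in 0..t, ⟪S r v, z⟫ := by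
  rw [hx _ _ (genTo_integral hS v ht),
    inner_intervalIntegral_left (hS.intervalIntegrable v le_rfl ht)]

theorem adjTo.norm_adjoint_apply_sub_le (hx : adjTo S x z) (hS : IsC0Semigroup S) {t M : ℝ}
    (ht : 0 ≤ t) (hM : ∀ r ∈ Icc 0 t, ‖S r‖ ≤ M) : ‖adjoint (S t) x - x‖ ≤ t * (M * ‖z‖) := by
  set u := adjoint (S t) x - x
  have hsq : ‖u‖ * ‖u‖ = ∫ r in 0..t, ⟪S r u, z⟫ := by
    rw [← hx.inner_sub_eq_integral hS u ht, ← real_inner_self_eq_norm_mul_norm, inner_sub_left,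
      inner_sub_left, adjoint_inner_left, real_inner_comm (S t u) x, real_inner_comm u x]
  have hbound : ∀ r ∈ uIoc 0 t, ‖⟪S r u, z⟫‖ ≤ M * ‖u‖ * ‖z‖ := fun r hr => by
    rw [uIoc_of_le ht] at hr
    refine (norm_inner_le_norm _ _).trans ?_
    gcongr
    exact ((S r).le_opNorm u).trans (by gcongr; exact hM r ⟨hr.1.le, hr.2⟩)
  have hle : ‖u‖ * ‖u‖ ≤ t * (M * ‖z‖) * ‖u‖ := by
    have := intervalIntegral.norm_integral_le_of_norm_le_const hbound
    rw [sub_zero, abs_of_nonneg ht, ← hsq, Real.norm_of_nonneg (by positivity)] at this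
    linarith
  rcases (norm_nonneg u).eq_or_lt with hu | hu
  · rw [← hu]
    have := (norm_nonneg _).trans (hM 0 ⟨le_rfl, ht⟩)
    positivity
  · exact le_of_mul_le_mul_right hle hu

theorem adjTo.tendsto_adjoint_apply (hx : adjTo S x z) (hS : IsC0Semigroup S) :
    Tendsto (fun t => adjoint (S t) x) (𝓝[>] 0) (𝓝 x) := by
  obtain ⟨M, hM⟩ := hS.exists_norm_le 1
  rw [tendsto_iff_norm_sub_tendsto_zero]
  refine squeeze_zero' (Eventually.of_forall fun _ => norm_nonneg _) ?_
    (((continuous_id.mul continuous_const).tendsto' 0 0 (zero_mul (M * ‖z‖))).mono_left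
      nhdsWithin_le_nhds)
  filter_upwards [self_mem_nhdsWithin, nhdsWithin_le_nhds (Iio_mem_nhds one_pos)] with t ht ht1
  exact hx.norm_adjoint_apply_sub_le hS (le_of_lt ht) fun r hr => hM r ⟨hr.1, hr.2.trans ht1.le⟩

end Adjoint

def adjDomain (S : ℝ → H →L[ℝ] H) : Submodule ℝ H where
  carrier := {x | ∃ z, adjTo S x z}
  add_mem' := by
    rintro x₁ x₂ ⟨z₁, h₁⟩ ⟨z₂, h₂⟩
    exact ⟨z₁ + z₂, fun y y' hy => by rw [inner_add_right, inner_add_right, h₁ y y' hy, h₂ y y' hy]⟩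
  zero_mem' := ⟨0, fun y y' _ => by rw [inner_zero_right, inner_zero_right]⟩
  smul_mem' := by
    rintro c x ⟨z, hz⟩
    exact ⟨c • z, fun y y' hy => by rw [real_inner_smul_right, real_inner_smul_right, hz y y' hy]⟩

namespace IsC0Semigroup

variable {S : ℝ → H →L[ℝ] H}

theorem adjTo_adjoint_of_eq_integral {V : H →L[ℝ] H} (hS : IsC0Semigroup S) {δ : ℝ} (hδ : 0 ≤ δ)
    (hV : ∀ x, V x = ∫ r in 0..δ, S r x) (b : H) :
    adjTo S (adjoint V b) (adjoint (S δ) b - b) := fun y y' hy => by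
  rw [adjoint_inner_right, hV, ← hy.sub_eq_integral hS hδ, inner_sub_left, inner_sub_right,
    adjoint_inner_right]

theorem dense_adjDomain (hS : IsC0Semigroup S) : Dense (adjDomain S : Set H) := by
  rw [Submodule.dense_iff_topologicalClosure_eq_top, Submodule.topologicalClosure_eq_top_iff,
    Submodule.eq_bot_iff]
  intro x hx
  -- `(∫₀^δ S r dr)* b ∈ dom(A*)` for every `b`, so `x ⊥ dom(A*)` kills `∫₀^δ S r x dr`,
  -- whose slope at `0` is `x`.
  have hzero {δ : ℝ} (hδ : 0 < δ) : ∫ r in 0..δ, S r x = 0 := by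
    obtain ⟨V, hV⟩ := hS.exists_clm_eq_integral hδ.le
    rw [← hV]
    refine ext_inner_left ℝ fun b => ?_
    rw [inner_zero_right, ← adjoint_inner_left]
    exact (Submodule.mem_orthogonal _ _).1 hx _ ⟨_, hS.adjTo_adjoint_of_eq_integral hδ.le hV b⟩
  have hslope := hasDerivWithinAt_Ioi_iff_tendsto_slope_zero.1
    (hasDerivWithinAt_Ioi_integral_of_continuousOn (hS.continuousOn x) le_rfl)
  rw [hS.map_zero, one_apply_eq_self] at hslope
  refine tendsto_nhds_unique hslope (tendsto_const_nhds.congr' ?_)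
  filter_upwards [self_mem_nhdsWithin] with ε (hε : 0 < ε)
  rw [zero_add, hzero hε, intervalIntegral.integral_same, sub_zero, smul_zero]

theorem adjoint (hS : IsC0Semigroup S) : IsC0Semigroup fun t => adjoint (S t) := by
  have hbdd (T : ℝ) : ∃ M, ∀ t ∈ Icc 0 T, ‖ContinuousLinearMap.adjoint (S t)‖ ≤ M := by
    obtain ⟨M, hM⟩ := hS.exists_norm_le T
    exact ⟨M, fun t ht => by rw [LinearIsometryEquiv.norm_map]; exact hM t ht⟩
  refine of_tendsto_nhdsGT_zero (by rw [hS.map_zero, adjoint_one]) (fun s t hs ht => ?_) hbdd ?_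
  · rw [add_comm, hS.map_add t s ht hs, adjoint_comp]
  · obtain ⟨M, hM⟩ := hbdd 1
    refine tendsto_apply_of_dense (M := M) ?_ hS.dense_adjDomain
      fun y ⟨z, hy⟩ => hy.tendsto_adjoint_apply hS
    filter_upwards [self_mem_nhdsWithin, nhdsWithin_le_nhds (Iio_mem_nhds one_pos)] with t ht ht1
    exact hM t ⟨le_of_lt ht, ht1.le⟩

end IsC0Semigroup

theorem adjTo.genTo_adjoint {S : ℝ → H →L[ℝ] H} {x z : H} (hx : adjTo S x z)
    (hS : IsC0Semigroup S) : genTo (fun t => adjoint (S t)) x z := by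
  have hT := hS.adjoint
  have hrepr {ε : ℝ} (hε : 0 ≤ ε) : adjoint (S ε) x - x = ∫ r in 0..ε, adjoint (S r) z := by
    refine ext_inner_right ℝ fun v => ?_
    rw [inner_intervalIntegral_left (hT.intervalIntegrable z le_rfl hε), inner_sub_left,
      adjoint_inner_left, ← inner_sub_right, real_inner_comm, hx.inner_sub_eq_integral hS v hε]
    simp only [adjoint_inner_left, real_inner_comm z]
  have hslope := hasDerivWithinAt_Ioi_iff_tendsto_slope_zero.1
    (hasDerivWithinAt_Ioi_integral_of_continuousOn (hT.continuousOn z) le_rfl)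
  simp only [hS.map_zero, adjoint_one, one_apply_eq_self, zero_add,
    intervalIntegral.integral_same, sub_zero] at hslope
  refine hslope.congr' ?_
  filter_upwards [self_mem_nhdsWithin] with ε (hε : 0 < ε)
  rw [hrepr hε.le]

namespace IsC0Semigroup

variable {S : ℝ → H →L[ℝ] H} {Q : H →L[ℝ] H}

theorem inner_map_adjoint_apply (hS : IsC0Semigroup S)
    (hAQ : ∀ x z : H, adjTo S x z → genTo S (Q x) (Q z)) {a a' b b' : H} (ha : adjTo S a a')
    (hb : adjTo S b b') {t : ℝ} (ht : 0 ≤ t) :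
    ⟪Q (ContinuousLinearMap.adjoint (S t) a), b⟫ = ⟪S t (Q a), b⟫ := by
  set T : ℝ → H →L[ℝ] H := fun s => ContinuousLinearMap.adjoint (S s)
  have hT : IsC0Semigroup T := hS.adjoint
  set Φ : ℝ → ℝ := fun σ => ⟪Q (T σ a), T (t - σ) b⟫
  have hcont : ContinuousOn Φ (Icc 0 t) :=
    (Q.continuous.comp_continuousOn ((hT.continuousOn a).mono Icc_subset_Ici_self)).inner
      ((hT.continuousOn b).comp (continuousOn_const.sub continuousOn_id)
        fun σ hσ => sub_nonneg.2 hσ.2)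
  have hderiv (σ : ℝ) (hσ : σ ∈ Ico 0 t) : HasDerivWithinAt Φ 0 (Ici σ) σ := by
    have hta : HasDerivWithinAt (fun s => Q (T s a)) (Q (T σ a')) (Ioi σ) σ :=
      Q.hasFDerivAt.comp_hasDerivWithinAt σ ((ha.genTo_adjoint hS).hasDerivWithinAt_Ioi hT hσ.1)
    have htb : HasDerivAt (fun s => T (t - s) b) ((-1 : ℝ) • T (t - σ) b') σ :=
      ((hb.genTo_adjoint hS).hasDerivAt hT (sub_pos.2 hσ.2)).scomp σ
        ((hasDerivAt_id σ).const_sub t)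
    have hsym : ⟪Q (T σ a'), T (t - σ) b⟫ = ⟪Q (T σ a), T (t - σ) b'⟫ :=
      hb.adjoint_apply hS (sub_nonneg.2 hσ.2.le) _ _ (hAQ _ _ (ha.adjoint_apply hS hσ.1))
    rw [← hasDerivWithinAt_Ioi_iff_Ici]
    refine (hta.inner ℝ htb.hasDerivWithinAt).congr_deriv ?_
    rw [hsym, neg_one_smul, inner_neg_right, neg_add_cancel]
  have hconst := constant_of_has_deriv_right_zero hcont hderiv t ⟨ht, le_rfl⟩
  simp only [Φ, T, sub_self, sub_zero, hS.map_zero, adjoint_one, one_apply_eq_self] at hconst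
  rw [hconst, adjoint_inner_right]

theorem map_adjoint_apply (hS : IsC0Semigroup S)
    (hAQ : ∀ x z : H, adjTo S x z → genTo S (Q x) (Q z)) {t : ℝ} (ht : 0 ≤ t) (x : H) :
    Q (ContinuousLinearMap.adjoint (S t) x) = S t (Q x) := by
  have hD := hS.dense_adjDomain
  have hon : EqOn (fun a => Q (ContinuousLinearMap.adjoint (S t) a)) (fun a => S t (Q a))
      (adjDomain S) := by
    rintro a ⟨a', ha⟩
    have hinner : EqOn (fun b => ⟪Q (ContinuousLinearMap.adjoint (S t) a), b⟫)
        (fun b => ⟪S t (Q a), b⟫) (adjDomain S) := fun b ⟨b', hb⟩ =>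
      hS.inner_map_adjoint_apply hAQ ha hb ht
    exact ext_inner_right ℝ (congrFun (Continuous.ext_on hD (by fun_prop) (by fun_prop) hinner))
  exact congrFun (Continuous.ext_on hD (by fun_prop) (by fun_prop) hon) x

end IsC0Semigroup

namespace HilbertBasis

variable {ι : Type*} (b : HilbertBasis ι ℝ H)

theorem enorm_sq_eq_tsum_s8 (w : H) : ‖w‖ₑ ^ 2 = ∑' i, ‖⟪b i, w⟫‖ₑ ^ 2 := by
  have hP : HasSum (fun i => ‖⟪b i, w⟫‖ ^ 2) (‖w‖ ^ 2) := by
    simpa [real_inner_comm, ← sq, real_inner_self_eq_norm_sq] using b.hasSum_inner_mul_inner w w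
  simp only [← ofReal_norm, ← ENNReal.ofReal_pow (norm_nonneg _)]
  rw [← hP.tsum_eq, ENNReal.ofReal_tsum_of_nonneg (fun i => by positivity) hP.summable]

theorem tsum_enorm_sq_adjoint (T : H →L[ℝ] H) :
    ∑' i, ‖adjoint T (b i)‖ₑ ^ 2 = ∑' i, ‖T (b i)‖ₑ ^ 2 := by
  simp_rw [b.enorm_sq_eq_tsum_s8 (adjoint T _), b.enorm_sq_eq_tsum_s8 (T _)]
  rw [ENNReal.tsum_comm]
  simp_rw [adjoint_inner_right, real_inner_comm]

theorem enorm_apply_sq_le_s8 (T : H →L[ℝ] H) (x : H) :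
    ‖T x‖ₑ ^ 2 ≤ ‖x‖ₑ ^ 2 * ∑' i, ‖T (b i)‖ₑ ^ 2 := by
  calc ‖T x‖ₑ ^ 2 = ∑' i, ‖⟪adjoint T (b i), x⟫‖ₑ ^ 2 := by
        simp_rw [b.enorm_sq_eq_tsum_s8 (T x), adjoint_inner_left]
    _ ≤ ∑' i, ‖x‖ₑ ^ 2 * ‖adjoint T (b i)‖ₑ ^ 2 := ENNReal.tsum_le_tsum fun i => by
        rw [← mul_pow, mul_comm]
        gcongr
        simp only [enorm_eq_nnnorm]
        exact_mod_cast nnnorm_inner_le_nnnorm _ _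
    _ = ‖x‖ₑ ^ 2 * ∑' i, ‖T (b i)‖ₑ ^ 2 := by rw [ENNReal.tsum_mul_left, b.tsum_enorm_sq_adjoint]

theorem integrableOn_norm_sq {R : ℝ → H →L[ℝ] H} {s : Set ℝ} (hs : MeasurableSet s) {x : H}
    (hcont : ContinuousOn (fun r => R r x) s) (hR : ∫⁻ r in s, ∑' i, ‖R r (b i)‖ₑ ^ 2 < ⊤) :
    IntegrableOn (fun r => ‖R r x‖ ^ 2) s := by
  refine ⟨(hcont.norm.pow 2).aestronglyMeasurable hs, ?_⟩
  calc ∫⁻ r in s, ‖‖R r x‖ ^ 2‖ₑ ≤ ∫⁻ r in s, ‖x‖ₑ ^ 2 * ∑' i, ‖R r (b i)‖ₑ ^ 2 :=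
        lintegral_mono fun r => by simpa only [enorm_pow, enorm_norm] using b.enorm_apply_sq_le_s8 _ x
    _ < ⊤ := by
        rw [lintegral_const_mul' _ _ (by simp)]
        exact ENNReal.mul_lt_top (by simp) hR

end HilbertBasis

theorem two_mul_norm_sq_midpoint_le {φ : ℝ → H} {g : ℝ → ℝ}
    (hφ : ∀ α β, 0 ≤ α → 0 ≤ β → ⟪φ α, φ β⟫ = g (α + β)) {α β : ℝ} (hα : 0 ≤ α) (hβ : 0 ≤ β) :
    2 * ‖φ ((α + β) / 2)‖ ^ 2 ≤ ‖φ α‖ ^ 2 + ‖φ β‖ ^ 2 := by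
  have hm : 0 ≤ (α + β) / 2 := by positivity
  rw [← real_inner_self_eq_norm_sq, hφ _ _ hm hm, add_halves, ← hφ _ _ hα hβ]
  nlinarith [real_inner_le_norm (φ α) (φ β), sq_nonneg (‖φ α‖ - ‖φ β‖)]

section MidpointConvex

variable {f : ℝ → ℝ}

theorem two_mul_mul_le_integral_of_midpoint
    (hmid : ∀ α β, 0 ≤ α → 0 ≤ β → 2 * f ((α + β) / 2) ≤ f α + f β)
    (hf : IntegrableOn f (Ioi 0)) {c h : ℝ} (hh : 0 ≤ h) (hhc : h ≤ c) :
    2 * h * f c ≤ ∫ x in c - h..c + h, f x := by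
  have hI : IntervalIntegrable f volume (c - h) (c + h) := by
    rw [intervalIntegrable_iff_integrableOn_Ioc_of_le (by linarith)]
    exact hf.mono_set fun x hx => lt_of_le_of_lt (by linarith) hx.1
  have hrefl : ∫ x in c - h..c + h, f (2 * c - x) = ∫ x in c - h..c + h, f x := by
    rw [intervalIntegral.integral_comp_sub_left]
    congr 1 <;> ring
  have hI' : IntervalIntegrable (fun x => f (2 * c - x)) volume (c - h) (c + h) := by
    have := hI.comp_sub_left (2 * c)
    rw [show 2 * c - (c - h) = c + h by ring, show 2 * c - (c + h) = c - h by ring] at this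
    exact this.symm
  have hmono := intervalIntegral.integral_mono_on (by linarith) intervalIntegrable_const
    (hI.add hI') fun x hx => by
      have := hmid x (2 * c - x) (by linarith [hx.1]) (by linarith [hx.2])
      rwa [show (x + (2 * c - x)) / 2 = c by ring] at this
  rw [intervalIntegral.integral_const, smul_eq_mul, intervalIntegral.integral_add hI hI',
    hrefl] at hmono
  linarith

theorem le_apply_zero_of_midpoint_convex
    (hmid : ∀ α β, 0 ≤ α → 0 ≤ β → 2 * f ((α + β) / 2) ≤ f α + f β)
    (hf : IntegrableOn f (Ioi 0)) {t : ℝ} (ht : 0 ≤ t) : f t ≤ f 0 := by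
  by_contra! hlt
  have htpos : 0 < t := ht.lt_of_ne (by rintro rfl; exact lt_irrefl _ hlt)
  set d := f t - f 0
  have hd : 0 < d := sub_pos.2 hlt
  have hinc (k : ℕ) : d ≤ f ((k + 1) * t) - f (k * t) := by
    induction k with
    | zero => simp [d]
    | succ k ih =>
      push_cast
      have := hmid (k * t) ((k + 1 + 1) * t) (by positivity) (by positivity)
      rw [show ((k : ℝ) * t + (k + 1 + 1) * t) / 2 = (k + 1) * t by ring] at this
      linarith
  have hgrowth (k : ℕ) : f 0 + k * d ≤ f (k * t) := by
    induction k with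
    | zero => simp
    | succ k ih =>
      have := hinc k
      push_cast at this ⊢
      linarith
  set I := ∫ x in Ioi 0, |f x|
  have hfa : IntegrableOn (fun x => |f x|) (Ioi 0) := hf.abs
  have hle_I {a b : ℝ} (ha : 0 ≤ a) (hab : a ≤ b) : ∫ x in a..b, f x ≤ I := by
    have hsub : Ioc a b ⊆ Ioi 0 := fun x hx => lt_of_le_of_lt ha hx.1
    rw [intervalIntegral.integral_of_le hab]
    calc ∫ x in Ioc a b, f x ≤ ∫ x in Ioc a b, |f x| :=
          integral_mono (hf.mono_set hsub) (hfa.mono_set hsub) fun x => le_abs_self _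
      _ ≤ I := setIntegral_mono_set hfa (Eventually.of_forall fun x => abs_nonneg _)
          (Eventually.of_forall hsub)
  have hbound (k : ℕ) (hk : 1 ≤ k) : 2 * t * (f 0 + k * d) ≤ I := by
    have hkt : t ≤ k * t := le_mul_of_one_le_left ht (by exact_mod_cast hk)
    calc 2 * t * (f 0 + k * d) ≤ 2 * t * f (k * t) := by gcongr; exact hgrowth k
      _ ≤ ∫ x in k * t - t..k * t + t, f x := two_mul_mul_le_integral_of_midpoint hmid hf ht hkt
      _ ≤ I := hle_I (by linarith) (by linarith)
  obtain ⟨k, hk⟩ := exists_nat_gt (max 1 ((I / (2 * t) - f 0) / d))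
  have hk1 : 1 ≤ k := by exact_mod_cast ((le_max_left _ _).trans hk.le)
  have hkd : I / (2 * t) - f 0 < k * d := (div_lt_iff₀ hd).1 ((le_max_right _ _).trans_lt hk)
  have := (div_lt_iff₀' (by positivity : 0 < 2 * t)).1 (by linarith : I / (2 * t) < f 0 + k * d)
  linarith [hbound k hk1]

end MidpointConvex

theorem statement8_general {ι : Type*}
    (S : ℝ → H →L[ℝ] H)
    (hS0 : S 0 = 1)
    (hSadd : ∀ s t : ℝ, 0 ≤ s → 0 ≤ t → S (s + t) = (S s).comp (S t))
    (hScont : ∀ x : H, ContinuousOn (fun t => S t x) (Set.Ici 0))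
    (Q sqrtQ : H →L[ℝ] H)
    (hsqrt_sa : IsSelfAdjoint sqrtQ)
    (hsqrt_sq : sqrtQ.comp sqrtQ = Q)
    -- (e_i) is an orthonormal basis of H
    (e : ι → H) (he : Orthonormal ℝ e)
    (he_tot : Dense ((Submodule.span ℝ (Set.range e) : Submodule ℝ H) : Set H))
    -- Hypothesis H, part 1: ∫₀^∞ Σ_i |Q^{1/2}S(s)*e_i|² ds < ∞
    (hint : (∫⁻ s in Set.Ioi (0:ℝ),
        ∑' i : ι, (‖sqrtQ (ContinuousLinearMap.adjoint (S s) (e i))‖₊ : ℝ≥0∞) ^ 2) < ⊤)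
    -- for every x ∈ dom(A*): Qx ∈ dom(A) and AQx = QA*x
    (hAQ : ∀ x z : H, adjTo S x z → genTo S (Q x) (Q z)) :
    ∀ t : ℝ, 0 ≤ t → ∀ x : H,
      ‖sqrtQ (ContinuousLinearMap.adjoint (S t) x)‖ ≤ ‖sqrtQ x‖ := by
  intro t ht x
  have hS : IsC0Semigroup S := ⟨hS0, hSadd, hScont⟩
  let b : HilbertBasis ι ℝ H :=
    HilbertBasis.mk he (Submodule.dense_iff_topologicalClosure_eq_top.1 he_tot).ge
  set φ : ℝ → H := fun s => sqrtQ (ContinuousLinearMap.adjoint (S s) x)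
  have hφ (α β : ℝ) (hα : 0 ≤ α) (hβ : 0 ≤ β) : ⟪φ α, φ β⟫ = ⟪x, S (α + β) (Q x)⟫ := by
    have hsym : ∀ u v, ⟪sqrtQ u, v⟫ = ⟪u, sqrtQ v⟫ := hsqrt_sa.isSymmetric
    rw [hsym, ← comp_apply sqrtQ sqrtQ, hsqrt_sq, hS.map_adjoint_apply hAQ hβ,
      adjoint_inner_left, hS.apply_apply hα hβ]
  have hφ_int : IntegrableOn (fun s => ‖φ s‖ ^ 2) (Ioi 0) :=
    b.integrableOn_norm_sq (R := fun s => sqrtQ ∘L ContinuousLinearMap.adjoint (S s))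
      measurableSet_Ioi
      ((sqrtQ.continuous.comp_continuousOn (hS.adjoint.continuousOn x)).mono Ioi_subset_Ici_self)
      (by simpa [b, enorm_eq_nnnorm] using hint)
  have hle := le_apply_zero_of_midpoint_convex
    (fun α β hα hβ => two_mul_norm_sq_midpoint_le (g := fun s => ⟪x, S s (Q x)⟫) hφ hα hβ) hφ_int ht
  simp only [φ, hS.map_zero, adjoint_one, one_apply_eq_self] at hle
  exact pow_le_pow_iff_left₀ (norm_nonneg _) (norm_nonneg _) two_ne_zero |>.1 hle

theorem statement8 {ι : Type*}
    (S : ℝ → H →L[ℝ] H)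
    (hS0 : S 0 = 1)
    (hSadd : ∀ s t : ℝ, 0 ≤ s → 0 ≤ t → S (s + t) = (S s).comp (S t))
    (hScont : ∀ x : H, ContinuousOn (fun t => S t x) (Set.Ici 0))
    (Q sqrtQ : H →L[ℝ] H) (hQsa : IsSelfAdjoint Q) (hQnn : ∀ x : H, 0 ≤ ⟪Q x, x⟫)
    (hsqrt_sa : IsSelfAdjoint sqrtQ) (hsqrt_nn : ∀ x : H, 0 ≤ ⟪sqrtQ x, x⟫)
    (hsqrt_sq : sqrtQ.comp sqrtQ = Q)
    -- (e_i) is an orthonormal basis of H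
    (e : ι → H) (he : Orthonormal ℝ e)
    (he_tot : Dense ((Submodule.span ℝ (Set.range e) : Submodule ℝ H) : Set H))
    -- Hypothesis H, part 1: ∫₀^∞ Σ_i |Q^{1/2}S(s)*e_i|² ds < ∞
    (hint : (∫⁻ s in Set.Ioi (0:ℝ),
        ∑' i : ι, (‖sqrtQ (ContinuousLinearMap.adjoint (S s) (e i))‖₊ : ℝ≥0∞) ^ 2) < ⊤)
    -- Hypothesis H, part 2: Q∞ is injective
    (hQinf_inj : Function.Injective (fun x : H =>
      ∫ s in Set.Ioi (0:ℝ), S s (Q (ContinuousLinearMap.adjoint (S s) x))))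
    -- for every x ∈ dom(A*): Qx ∈ dom(A) and AQx = QA*x
    (hAQ : ∀ x z : H, adjTo S x z → genTo S (Q x) (Q z)) :
    ∀ t : ℝ, 0 ≤ t → ∀ x : H,
      ‖sqrtQ (ContinuousLinearMap.adjoint (S t) x)‖ ≤ ‖sqrtQ x‖ :=
  statement8_general S hS0 hSadd hScont Q sqrtQ hsqrt_sa hsqrt_sq e he he_tot hint hAQ
end
end
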